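/- Let G be a graph with cut vertex v such that G is the vertex-amalgamation of blocks G_1,…,G_n at v, and let W be a resolving set of G. Then for every i, the set W ∩ V(G_i), together with the terminal vertex, has size at least dim(G_i) − 1 + 1; equivalently |W ∩ (V(G_i) \ {v})| ≥ dim(G_i) − 1. -/
import Mathlib


open SimpleGraph

def resolves {V : Type*} (G : SimpleGraph V) (W : Finset V) : Prop :=
  ∀ u v : V, (∀ w ∈ W, G.dist u w = G.dist v w) → u = v

noncomputable def metricDim {V : Type*} [Fintype V] (G : SimpleGraph V) : ℕ :=
  sInf {k | ∃ W : Finset V, resolves G W ∧ W.card = k}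

def IsVertexAmalMap {ι V : Type*} {Vi : ι → Type*}
    (Gs : ∀ i, SimpleGraph (Vi i)) (v0 : ∀ i, Vi i)
    (G : SimpleGraph V) (v : V) (f : ∀ i, Vi i → V) : Prop :=
  (∀ i, Function.Injective (f i)) ∧
  (∀ i, f i (v0 i) = v) ∧
  (∀ i x y, G.Adj (f i x) (f i y) ↔ (Gs i).Adj x y) ∧
  (∀ i j x y, i ≠ j → f i x = f j y → f i x = v) ∧
  (∀ a : V, ∃ i x, f i x = a) ∧
  (∀ a b : V, G.Adj a b → ∃ i x y, f i x = a ∧ f i y = b)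

def IsVertexAmal {ι V : Type*} {Vi : ι → Type*}
    (Gs : ∀ i, SimpleGraph (Vi i)) (v0 : ∀ i, Vi i)
    (G : SimpleGraph V) (v : V) : Prop :=
  ∃ f, IsVertexAmalMap Gs v0 G v f

def IsEdgeAmalMap {ι V : Type*} {Vi : ι → Type*}
    (Gs : ∀ i, SimpleGraph (Vi i)) (u0 w0 : ∀ i, Vi i)
    (G : SimpleGraph V) (u w : V) (f : ∀ i, Vi i → V) : Prop :=
  (∀ i, (Gs i).Adj (u0 i) (w0 i)) ∧
  (∀ i, Function.Injective (f i)) ∧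
  (∀ i, f i (u0 i) = u) ∧
  (∀ i, f i (w0 i) = w) ∧
  (∀ i x y, G.Adj (f i x) (f i y) ↔ (Gs i).Adj x y) ∧
  (∀ i j x y, i ≠ j → f i x = f j y → f i x = u ∨ f i x = w) ∧
  (∀ a : V, ∃ i x, f i x = a) ∧
  (∀ a b : V, G.Adj a b → ∃ i x y, f i x = a ∧ f i y = b)

def IsEdgeAmal {ι V : Type*} {Vi : ι → Type*}
    (Gs : ∀ i, SimpleGraph (Vi i)) (u0 w0 : ∀ i, Vi i)
    (G : SimpleGraph V) (u w : V) : Prop :=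
  ∃ f, IsEdgeAmalMap Gs u0 w0 G u w f

section Aux

variable {ι V : Type*} {Vi : ι → Type*}
  {Gs : ∀ i, SimpleGraph (Vi i)} {v0 : ∀ i, Vi i}
  {G : SimpleGraph V} {v : V} {f : ∀ i, Vi i → V}

/-- The embedding of a block as a graph homomorphism. -/
def amalHom (h : IsVertexAmalMap Gs v0 G v f) (i : ι) : Gs i →g G :=
  ⟨f i, fun {a b} hab => (h.2.2.1 i a b).mpr hab⟩

/-- Any walk from a vertex outside block `i` into block `i` passes through `v`. -/
lemma amal_reach (h : IsVertexAmalMap Gs v0 G v f) (i : ι) :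
    ∀ {c b : V} (q : G.Walk c b), b ∈ Set.range (f i) → c ∉ Set.range (f i) →
      v ∈ q.support := by
  intro c b q
  induction q with
  | nil => intro hb hc; exact absurd hb hc
  | @cons c d e hadj p ih =>
    intro hb hc
    by_cases hd : d ∈ Set.range (f i)
    · obtain ⟨z, hz⟩ := hd
      obtain ⟨j, a, b', ha, hb'⟩ := h.2.2.2.2.2 c d hadj
      have hji : j ≠ i := by rintro rfl; exact hc ⟨a, ha⟩
      have hdv : d = v := by
        rw [← hz]
        exact h.2.2.2.1 i j z b' hji.symm (by rw [hz, ← hb'])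
      rw [SimpleGraph.Walk.support_cons]
      exact List.mem_cons_of_mem _ (hdv ▸ p.start_mem_support)
    · rw [SimpleGraph.Walk.support_cons]
      exact List.mem_cons_of_mem _ (ih hb hd)

/-- Any walk in `G` between two vertices of block `i` projects to a walk in `Gs i`
of no greater length. -/
lemma amal_project (h : IsVertexAmalMap Gs v0 G v f) (i : ι) :
    ∀ (N : ℕ) {a b : V} (p : G.Walk a b) {x y : Vi i}, f i x = a → f i y = b →
      p.length ≤ N → ∃ q : (Gs i).Walk x y, q.length ≤ p.length := by
  classical
  intro N
  induction N with
  | zero =>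
    intro a b p x y hxa hyb hp
    have hxy : x = y := h.1 i (by
      rw [hxa, hyb]; exact SimpleGraph.Walk.eq_of_length_eq_zero (Nat.le_zero.mp hp))
    subst hxy
    exact ⟨SimpleGraph.Walk.nil, by simp⟩
  | succ N ih =>
    intro a b p x y hxa hyb hp
    cases p with
    | nil =>
      have hxy : x = y := h.1 i (by rw [hxa, hyb])
      subst hxy
      exact ⟨SimpleGraph.Walk.nil, by simp⟩
    | @cons _ d _ hadj p' =>
      have hp' : p'.length ≤ N := by
        simp only [SimpleGraph.Walk.length_cons] at hp; omega
      by_cases hd : d ∈ Set.range (f i)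
      · obtain ⟨z, hz⟩ := hd
        have hxz : (Gs i).Adj x z := (h.2.2.1 i x z).mp (by rw [hxa, hz]; exact hadj)
        obtain ⟨q, hq⟩ := ih p' hz hyb hp'
        exact ⟨SimpleGraph.Walk.cons hxz q, by
          simp only [SimpleGraph.Walk.length_cons]; omega⟩
      · obtain ⟨j, a', b', ha', hb'⟩ := h.2.2.2.2.2 _ _ hadj
        have hji : j ≠ i := by rintro rfl; exact hd ⟨b', hb'⟩
        have hxv : f i x = v := h.2.2.2.1 i j x a' hji.symm (by rw [hxa, ← ha'])
        have hxv0 : x = v0 i := h.1 i (by rw [hxv, h.2.1 i])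
        subst hxv0
        have hvmem : v ∈ p'.support :=
          amal_reach h i p' ⟨y, hyb⟩ hd
        have hlen : (p'.dropUntil v hvmem).length ≤ p'.length :=
          SimpleGraph.Walk.length_dropUntil_le p' hvmem
        obtain ⟨q, hq⟩ := ih (p'.dropUntil v hvmem) (h.2.1 i) hyb (by omega)
        exact ⟨q, by simp only [SimpleGraph.Walk.length_cons]; omega⟩

/-- Distances within a block agree with distances in the amalgamation. -/
lemma amal_dist (h : IsVertexAmalMap Gs v0 G v f) (hconn : ∀ i, (Gs i).Connected)
    (i : ι) (x y : Vi i) : G.dist (f i x) (f i y) = (Gs i).dist x y := by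
  have hr : (Gs i).Reachable x y := (hconn i).preconnected x y
  apply le_antisymm
  · obtain ⟨q, hq⟩ := hr.exists_walk_length_eq_dist
    calc G.dist (f i x) (f i y) ≤ (q.map (amalHom h i)).length := SimpleGraph.dist_le _
      _ = (Gs i).dist x y := by rw [SimpleGraph.Walk.length_map, hq]
  · have hR : G.Reachable (f i x) (f i y) := hr.map (amalHom h i)
    obtain ⟨p, hpl⟩ := hR.exists_walk_length_eq_dist
    obtain ⟨q, hq⟩ := amal_project h i p.length p rfl rfl le_rfl
    calc (Gs i).dist x y ≤ q.length := SimpleGraph.dist_le _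
      _ ≤ p.length := hq
      _ = G.dist (f i x) (f i y) := hpl

lemma amal_connected (h : IsVertexAmalMap Gs v0 G v f)
    (hconn : ∀ i, (Gs i).Connected) : G.Connected := by
  rw [SimpleGraph.connected_iff]
  have key : ∀ a : V, G.Reachable a v := by
    intro a
    obtain ⟨i, x, rfl⟩ := h.2.2.2.2.1 a
    have hr : G.Reachable (f i x) (f i (v0 i)) :=
      ((hconn i).preconnected x (v0 i)).map (amalHom h i)
    rwa [h.2.1 i] at hr
  exact ⟨fun a b => (key a).trans (key b).symm, ⟨v⟩⟩

/-- Distance from a block vertex to any outside vertex splits at `v`. -/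
lemma amal_split (h : IsVertexAmalMap Gs v0 G v f) (hconn : ∀ i, (Gs i).Connected)
    (i : ι) (x : Vi i) {w : V} (hw : w ∉ Set.range (f i)) :
    G.dist (f i x) w = G.dist (f i x) v + G.dist v w := by
  classical
  have hG : G.Connected := amal_connected h hconn
  apply le_antisymm
  · exact hG.dist_triangle
  · obtain ⟨p, hpl⟩ := (hG.preconnected (f i x) w).exists_walk_length_eq_dist
    have hvr : v ∈ p.reverse.support := amal_reach h i p.reverse ⟨x, rfl⟩ hw
    have hv : v ∈ p.support := by
      rwa [SimpleGraph.Walk.support_reverse, List.mem_reverse] at hvr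
    have h1 : G.dist (f i x) v ≤ (p.takeUntil v hv).length := SimpleGraph.dist_le _
    have h2 : G.dist v w ≤ (p.dropUntil v hv).length := SimpleGraph.dist_le _
    have h3 : (p.takeUntil v hv).length + (p.dropUntil v hv).length = p.length := by
      rw [← SimpleGraph.Walk.length_append, SimpleGraph.Walk.take_spec]
    omega

end Aux

theorem stmt12 {V : Type*} [Fintype V] (n : ℕ) (hn : 1 ≤ n)
    {Vi : Fin n → Type*} [∀ i, Fintype (Vi i)]
    (Gs : ∀ i, SimpleGraph (Vi i)) (hconn : ∀ i, (Gs i).Connected)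
    (v0 : ∀ i, Vi i) (G : SimpleGraph V) (v : V)
    (f : ∀ i, Vi i → V)
    (h : IsVertexAmalMap Gs v0 G v f)
    (W : Finset V) (hW : resolves G W) :
    ∀ i, (metricDim (Gs i) : ℤ) - 1 ≤
      (((W : Set V)) ∩ (f i '' {x | x ≠ v0 i})).ncard := by
  intro i
  classical
  set S : Finset (Vi i) := Finset.univ.filter (fun x => x ≠ v0 i ∧ f i x ∈ W) with hS
  have hdistv : ∀ x : Vi i, G.dist (f i x) v = (Gs i).dist x (v0 i) := by
    intro x
    rw [← h.2.1 i]
    exact amal_dist h hconn i x (v0 i)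
  have hres : resolves (Gs i) (insert (v0 i) S) := by
    intro u u' hd
    have hv0 : (Gs i).dist u (v0 i) = (Gs i).dist u' (v0 i) :=
      hd _ (Finset.mem_insert_self _ _)
    have key : ∀ w ∈ W, G.dist (f i u) w = G.dist (f i u') w := by
      intro w hw
      by_cases hwr : w ∈ Set.range (f i)
      · obtain ⟨z, rfl⟩ := hwr
        rw [amal_dist h hconn i, amal_dist h hconn i]
        by_cases hz : z = v0 i
        · subst hz; exact hv0
        · exact hd z (Finset.mem_insert_of_mem (by simp [hS, hz, hw]))
      · rw [amal_split h hconn i u hwr, amal_split h hconn i u' hwr,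
          hdistv, hdistv, hv0]
    have := hW (f i u) (f i u') key
    exact h.1 i this
  have hdim : metricDim (Gs i) ≤ (insert (v0 i) S).card :=
    Nat.sInf_le ⟨insert (v0 i) S, hres, rfl⟩
  have hcard : (insert (v0 i) S).card ≤ S.card + 1 := Finset.card_insert_le _ _
  have himg : (W : Set V) ∩ (f i '' {x | x ≠ v0 i}) = f i '' (S : Set (Vi i)) := by
    ext a
    simp only [Set.mem_inter_iff, Set.mem_image, Set.mem_setOf_eq, Finset.coe_filter,
      Finset.mem_coe, hS, Finset.mem_filter, Finset.mem_univ, true_and]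
    constructor
    · rintro ⟨haW, x, hx, rfl⟩; exact ⟨x, ⟨hx, haW⟩, rfl⟩
    · rintro ⟨x, ⟨hx, haW⟩, rfl⟩; exact ⟨haW, x, hx, rfl⟩
  rw [himg, Set.ncard_image_of_injective _ (h.1 i), Set.ncard_coe_finset]
  have := hdim.trans hcard
  omega
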